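/- Let α ∈ (0,d) and let E = ∩_i E_i be the fractal lattice set as above with δ_i := q_i^{−d/α}. Then for every r ≥ δ_i and every x ∈ ℝ^d, the Lebesgue measure of the δ_i-neighborhood of E intersected with B(x,r) satisfies |E_{δ_i} ∩ B(x,r)| ≲ (r/δ_i)^α δ_i^d; that is, E is {δ_i}-discrete α-regular. -/

import Mathlib

/-!
The set `E` lies in its `i`-th level, a union of balls of radius `δ = q_i^{-d/α}` around the grid
points `u / q_i`. Hence `E_δ ∩ B(x, r)` is covered by the `3δ`-balls around the grid points within
`4r` of `x`, and there are at most `min (q_i + 1) (8 q_i r + 1) ^ d` of those. Since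
`r ^ α q_i ^ d = (r / δ) ^ α ≥ 1` and `α ≤ d`, this count is `≲ (r / δ) ^ α`, each ball has volume
`≲ δ ^ d`, and the bound follows.
-/

open MeasureTheory ENNReal

/-- The fractal lattice set `E = ∩_i E_i`, where `E_i` is the union over
`u ∈ {0,1,…,q_i}^d` of the open balls of radius `q_i^{-d/α}` centered at `u/q_i`. -/
noncomputable def latticeSet (d : ℕ) (α : ℝ) (q : ℕ → ℕ) : Set (EuclideanSpace ℝ (Fin d)) :=
  ⋂ i, ⋃ u ∈ {u : Fin d → ℕ | ∀ j, u j ≤ q i},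
    Metric.ball ((WithLp.equiv 2 (Fin d → ℝ)).symm (fun j => (u j : ℝ) / (q i : ℝ)))
      ((q i : ℝ) ^ (-(d : ℝ) / α))

open Metric Finset

section Covering

variable {E ι : Type*}

theorem biUnion_ball_inter_ball_subset [PseudoMetricSpace E] (c : ι → E) (s : Set ι)
    (ρ r : ℝ) (x : E) :
    (⋃ i ∈ s, ball (c i) ρ) ∩ ball x r ⊆ ⋃ i ∈ {i ∈ s | dist (c i) x < ρ + r}, ball (c i) ρ := by
  rintro y ⟨hy, hyx⟩
  obtain ⟨i, hi, hyi⟩ := Set.mem_iUnion₂.mp hy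
  have hix : dist (c i) x < ρ + r :=
    (dist_triangle_left _ _ y).trans_lt (add_lt_add (mem_ball.mp hyi) (mem_ball.mp hyx))
  exact Set.mem_biUnion ⟨hi, hix⟩ hyi

theorem cthickening_subset_biUnion_ball [SeminormedAddCommGroup E] [NormedSpace ℝ E]
    {S : Set E} {c : ι → E} {s : Set ι} {δ : ℝ} (hδ : 0 < δ)
    (hS : S ⊆ ⋃ i ∈ s, ball (c i) δ) :
    cthickening δ S ⊆ ⋃ i ∈ s, ball (c i) (3 * δ) := by
  calc cthickening δ S ⊆ thickening (2 * δ) S :=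
        cthickening_subset_thickening' (by positivity) (by linarith) S
    _ ⊆ thickening (2 * δ) (⋃ i ∈ s, ball (c i) δ) := thickening_subset_of_subset _ hS
    _ = ⋃ i ∈ s, ball (c i) (3 * δ) := by
        rw [show 3 * δ = 2 * δ + δ by ring]
        simp only [thickening_biUnion, thickening_ball (by positivity : 0 < 2 * δ) hδ]

theorem measure_biUnion_ball_le [NormedAddCommGroup E] [NormedSpace ℝ E] [MeasurableSpace E]
    [BorelSpace E] [FiniteDimensional ℝ E] (μ : Measure E) [μ.IsAddHaarMeasure]
    (F : Finset ι) (c : ι → E) {ρ : ℝ} (hρ : 0 < ρ) :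
    μ (⋃ i ∈ F, ball (c i) ρ) ≤
      ENNReal.ofReal (#F * ρ ^ Module.finrank ℝ E * μ.real (ball 0 1)) := by
  calc μ (⋃ i ∈ F, ball (c i) ρ) ≤ ∑ i ∈ F, μ (ball (c i) ρ) := measure_biUnion_finset_le F _
    _ = ENNReal.ofReal (#F * ρ ^ Module.finrank ℝ E * μ.real (ball 0 1)) := by
        simp only [Measure.addHaar_ball_of_pos μ _ hρ, sum_const, nsmul_eq_mul]
        rw [ENNReal.ofReal_mul (by positivity), ENNReal.ofReal_mul (by positivity),
          ofReal_measureReal measure_ball_lt_top.ne, ENNReal.ofReal_natCast, mul_assoc]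

end Covering

theorem Finset.card_le_of_forall_sub_le (S : Finset ℕ) {L : ℝ} (hL : 0 ≤ L)
    (h : ∀ m ∈ S, ∀ n ∈ S, (n : ℝ) - m ≤ L) : (#S : ℝ) ≤ L + 1 := by
  rcases S.eq_empty_or_nonempty with rfl | hne
  · simp only [card_empty, Nat.cast_zero]; linarith
  set m := S.min' hne
  have hsub : S ⊆ Icc m (m + ⌊L⌋₊) := fun n hn =>
    mem_Icc.mpr ⟨S.min'_le n hn, by
      have := Nat.le_floor (show ((n - m : ℕ) : ℝ) ≤ L by
        rw [Nat.cast_sub (S.min'_le n hn)]; exact h m (S.min'_mem hne) n hn)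
      omega⟩
  calc (#S : ℝ) ≤ #(Icc m (m + ⌊L⌋₊)) := by exact_mod_cast card_le_card hsub
    _ = ⌊L⌋₊ + 1 := by rw [Nat.card_Icc]; norm_cast; omega
    _ ≤ L + 1 := by linarith [Nat.floor_le hL]

theorem card_filter_abs_div_sub_lt_le (Q : ℕ) (hQ : 0 < Q) (a : ℝ) {s : ℝ} (hs : 0 ≤ s) :
    (#((range (Q + 1)).filter fun n : ℕ => |n / Q - a| < s) : ℝ) ≤
      min ((Q : ℝ) + 1) (2 * Q * s + 1) := by
  have hQ' : (0 : ℝ) < Q := Nat.cast_pos.mpr hQ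
  refine le_min ?_ ?_
  · exact_mod_cast (card_filter_le _ _).trans (card_range _).le
  · refine card_le_of_forall_sub_le _ (by positivity) fun m hm n hn => ?_
    simp only [mem_filter] at hm hn
    have hmn : (n : ℝ) - m = Q * ((n / Q - a) - (m / Q - a)) := by field_simp; ring
    rw [hmn]
    have := abs_lt.mp hm.2
    have := abs_lt.mp hn.2
    nlinarith

theorem min_pow_le_mul_rpow_mul_pow {d : ℕ} {α Q r : ℝ} (hα : 0 ≤ α) (hαd : α ≤ d)
    (hQ : 1 ≤ Q) (hr : 0 < r) (h1 : 1 ≤ r ^ α * Q ^ d) :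
    min (Q + 1) (8 * Q * r + 1) ^ d ≤ 9 ^ d * (r ^ α * Q ^ d) := by
  have hm0 : 0 ≤ min (Q + 1) (8 * Q * r + 1) := le_min (by linarith) (by positivity)
  rcases le_or_gt 1 r with hr1 | hr1
  · calc min (Q + 1) (8 * Q * r + 1) ^ d ≤ (9 * Q) ^ d :=
          pow_le_pow_left₀ hm0 ((min_le_left _ _).trans (by linarith)) d
      _ = 9 ^ d * Q ^ d := mul_pow _ _ _
      _ ≤ 9 ^ d * (r ^ α * Q ^ d) := by
          gcongr
          exact le_mul_of_one_le_left (by positivity) (Real.one_le_rpow hr1 hα)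
  rcases le_or_gt (Q * r) 1 with hQr | hQr
  · calc min (Q + 1) (8 * Q * r + 1) ^ d ≤ 9 ^ d :=
          pow_le_pow_left₀ hm0 ((min_le_right _ _).trans (by linarith)) d
      _ ≤ 9 ^ d * (r ^ α * Q ^ d) := le_mul_of_one_le_right (by positivity) h1
  · calc min (Q + 1) (8 * Q * r + 1) ^ d ≤ (9 * (Q * r)) ^ d :=
          pow_le_pow_left₀ hm0 ((min_le_right _ _).trans (by linarith)) d
      _ = 9 ^ d * (r ^ (d : ℝ) * Q ^ d) := by rw [Real.rpow_natCast]; ring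
      _ ≤ 9 ^ d * (r ^ α * Q ^ d) := by
          have := Real.rpow_le_rpow_of_exponent_ge hr hr1.le hαd
          gcongr

theorem div_rpow_neg_div_rpow {d : ℕ} {α Q r : ℝ} (hα : α ≠ 0) (hQ : 0 < Q) (hr : 0 ≤ r) :
    (r / Q ^ (-(d : ℝ) / α)) ^ α = r ^ α * Q ^ d := by
  rw [Real.div_rpow hr (by positivity), ← Real.rpow_mul hQ.le, div_mul_cancel₀ _ hα,
    Real.rpow_neg hQ.le, Real.rpow_natCast, div_inv_eq_mul]

section Lattice

variable (d : ℕ)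

noncomputable def latticePoint (Q : ℕ) (u : Fin d → ℕ) : EuclideanSpace ℝ (Fin d) :=
  (WithLp.equiv 2 (Fin d → ℝ)).symm fun j => (u j : ℝ) / Q

theorem latticeSet_subset_iUnion_ball (α : ℝ) (q : ℕ → ℕ) (i : ℕ) :
    latticeSet d α q ⊆ ⋃ u ∈ {u : Fin d → ℕ | ∀ j, u j ≤ q i},
      ball (latticePoint d (q i) u) ((q i : ℝ) ^ (-(d : ℝ) / α)) :=
  Set.iInter_subset _ i

noncomputable def nearbyLatticeIndices (Q : ℕ) (x : EuclideanSpace ℝ (Fin d)) (s : ℝ) :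
    Finset (Fin d → ℕ) :=
  Fintype.piFinset fun j => (range (Q + 1)).filter fun n : ℕ => |n / Q - x j| < s

variable {d}

theorem mem_nearbyLatticeIndices {Q : ℕ} {u : Fin d → ℕ} {x : EuclideanSpace ℝ (Fin d)} {s : ℝ}
    (hu : ∀ j, u j ≤ Q) (hux : dist (latticePoint d Q u) x < s) :
    u ∈ nearbyLatticeIndices d Q x s := by
  refine Fintype.mem_piFinset.mpr fun j => mem_filter.mpr ⟨mem_range_succ_iff.mpr (hu j), ?_⟩
  rw [← Real.dist_eq]
  exact (PiLp.dist_apply_le _ _ j).trans_lt hux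

theorem card_nearbyLatticeIndices_le {Q : ℕ} (hQ : 0 < Q) (x : EuclideanSpace ℝ (Fin d))
    {s : ℝ} (hs : 0 ≤ s) :
    (#(nearbyLatticeIndices d Q x s) : ℝ) ≤ min ((Q : ℝ) + 1) (2 * Q * s + 1) ^ d := by
  rw [nearbyLatticeIndices, Fintype.card_piFinset, Nat.cast_prod]
  calc ∏ j, (#((range (Q + 1)).filter fun n : ℕ => |n / Q - x j| < s) : ℝ)
      ≤ ∏ _j : Fin d, min ((Q : ℝ) + 1) (2 * Q * s + 1) :=
        prod_le_prod (fun _ _ => Nat.cast_nonneg _)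
          fun j _ => card_filter_abs_div_sub_lt_le Q hQ (x j) hs
    _ = _ := by rw [prod_const, card_univ, Fintype.card_fin]

theorem cthickening_latticeSet_inter_ball_subset {α : ℝ} {q : ℕ → ℕ} {i : ℕ} (hq : 0 < q i)
    {r : ℝ} (x : EuclideanSpace ℝ (Fin d)) (hr : (q i : ℝ) ^ (-(d : ℝ) / α) ≤ r) :
    cthickening ((q i : ℝ) ^ (-(d : ℝ) / α)) (latticeSet d α q) ∩ ball x r ⊆
      ⋃ u ∈ nearbyLatticeIndices d (q i) x (4 * r),
        ball (latticePoint d (q i) u) (3 * (q i : ℝ) ^ (-(d : ℝ) / α)) := by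
  set δ := (q i : ℝ) ^ (-(d : ℝ) / α)
  have hδ : 0 < δ := Real.rpow_pos_of_pos (Nat.cast_pos.mpr hq) _
  refine (Set.inter_subset_inter_left _ (cthickening_subset_biUnion_ball hδ
    (latticeSet_subset_iUnion_ball d α q i))).trans
    ((biUnion_ball_inter_ball_subset _ _ _ _ x).trans (Set.biUnion_subset_biUnion_left ?_))
  rintro u ⟨hu, hux⟩
  exact mem_nearbyLatticeIndices hu (by linarith)

end Lattice

theorem stmt_6_general (d : ℕ) (α : ℝ) (hα : 0 < α) (hαd : α < d)
    (q : ℕ → ℕ) (hq : ∀ i, 2 ≤ q i) :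
    ∃ K : ℝ, 0 < K ∧ ∀ (i : ℕ) (r : ℝ) (x : EuclideanSpace ℝ (Fin d)),
      (q i : ℝ) ^ (-(d : ℝ) / α) ≤ r →
      volume (Metric.cthickening ((q i : ℝ) ^ (-(d : ℝ) / α)) (latticeSet d α q) ∩
          Metric.ball x r) ≤
        ENNReal.ofReal (K * (r / ((q i : ℝ) ^ (-(d : ℝ) / α))) ^ α *
          ((q i : ℝ) ^ (-(d : ℝ) / α)) ^ (d : ℝ)) := by
  set C := volume.real (ball (0 : EuclideanSpace ℝ (Fin d)) 1)
  have hC : 0 < C :=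
    ENNReal.toReal_pos (measure_ball_pos volume 0 one_pos).ne' measure_ball_lt_top.ne
  refine ⟨27 ^ d * C, by positivity, fun i r x hr => ?_⟩
  have hQ0 : 0 < q i := by linarith [hq i]
  have hQ : (1 : ℝ) ≤ q i := by exact_mod_cast hQ0
  set δ := (q i : ℝ) ^ (-(d : ℝ) / α)
  have hδ : 0 < δ := Real.rpow_pos_of_pos (by positivity) _
  have hr0 : 0 < r := hδ.trans_le hr
  have hscale : (r / δ) ^ α = r ^ α * (q i : ℝ) ^ d :=
    div_rpow_neg_div_rpow hα.ne' (by positivity) hr0.le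
  have hcard : (#(nearbyLatticeIndices d (q i) x (4 * r)) : ℝ) ≤ 9 ^ d * (r / δ) ^ α := by
    refine (card_nearbyLatticeIndices_le (by positivity) x (by positivity)).trans ?_
    rw [hscale, show 2 * (q i : ℝ) * (4 * r) = 8 * q i * r by ring]
    exact min_pow_le_mul_rpow_mul_pow hα.le hαd.le hQ hr0
      (hscale ▸ Real.one_le_rpow ((one_le_div hδ).mpr hr) hα.le)
  calc volume (cthickening δ (latticeSet d α q) ∩ ball x r)
      ≤ ENNReal.ofReal (#(nearbyLatticeIndices d (q i) x (4 * r)) * (3 * δ) ^ d * C) := by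
        refine (measure_mono
          (cthickening_latticeSet_inter_ball_subset (by positivity) x hr)).trans ?_
        simpa only [finrank_euclideanSpace_fin] using
          measure_biUnion_ball_le (volume : Measure (EuclideanSpace ℝ (Fin d))) _ _
            (by positivity : 0 < 3 * δ)
    _ ≤ ENNReal.ofReal (27 ^ d * C * (r / δ) ^ α * δ ^ (d : ℝ)) := by
        rw [Real.rpow_natCast]
        refine ENNReal.ofReal_le_ofReal ?_
        calc _ ≤ 9 ^ d * (r / δ) ^ α * (3 * δ) ^ d * C := by gcongr
          _ = _ := by
            rw [show (27 : ℝ) ^ d = 9 ^ d * 3 ^ d by rw [← mul_pow]; norm_num]; ring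

/-- The fractal lattice set is `{δ_i}`-discrete `α`-regular with `δ_i = q_i^{-d/α}`:
for every `r ≥ δ_i` and every `x`, `|E_{δ_i} ∩ B(x,r)| ≲ (r/δ_i)^α δ_i^d`. -/
theorem stmt_6 (d : ℕ) (hd : 1 ≤ d) (α : ℝ) (hα : 0 < α) (hαd : α < d)
    (q : ℕ → ℕ) (hq : ∀ i, 2 ≤ q i) (hgrow : ∀ i, 1 ≤ i → q (i + 1) = q i ^ i) :
    ∃ K : ℝ, 0 < K ∧ ∀ (i : ℕ) (r : ℝ) (x : EuclideanSpace ℝ (Fin d)),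
      (q i : ℝ) ^ (-(d : ℝ) / α) ≤ r →
      volume (Metric.cthickening ((q i : ℝ) ^ (-(d : ℝ) / α)) (latticeSet d α q) ∩
          Metric.ball x r) ≤
        ENNReal.ofReal (K * (r / ((q i : ℝ) ^ (-(d : ℝ) / α))) ^ α *
          ((q i : ℝ) ^ (-(d : ℝ) / α)) ^ (d : ℝ)) :=
  stmt_6_general d α hα hαd q hq
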